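/- Let A, B, X be bounded linear operators on a complex Hilbert space H with A and B self-adjoint, let m > 0 be a real number, and suppose X − mI is a positive operator. Then w(AX − XB) ≥ (1/2)‖(A − B)X + X(A − B)‖, where w denotes the numerical radius. -/

import Mathlib

/-!
Writing `T = A X - X B`, self-adjointness of `A`, `B` and `X` gives
`(A - B) X + X (A - B) = T + T*`. This operator is self-adjoint, so its norm is the supremum of
`|Re ⟪(T + T*) x, x⟫| = 2 |Re ⟪T x, x⟫|` over unit vectors `x`, which is at most `2 w(T)`.
-/

/-- The numerical radius of a bounded linear operator. -/
noncomputable def numRadius {E : Type*} [NormedAddCommGroup E] [InnerProductSpace ℂ E]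
    (T : E →L[ℂ] E) : ℝ :=
  ⨆ x : {x : E // ‖x‖ = 1}, ‖(inner ℂ (T x.val) x.val : ℂ)‖

section NumRadius

variable {E : Type*} [NormedAddCommGroup E] [InnerProductSpace ℂ E]

theorem numRadius_nonneg (T : E →L[ℂ] E) : 0 ≤ numRadius T :=
  Real.iSup_nonneg fun _ ↦ norm_nonneg _

theorem bddAbove_norm_inner_apply_self (T : E →L[ℂ] E) :
    BddAbove (Set.range fun x : {x : E // ‖x‖ = 1} ↦ ‖(inner ℂ (T x.val) x.val : ℂ)‖) := by
  refine ⟨‖T‖, ?_⟩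
  rintro _ ⟨⟨x, hx⟩, rfl⟩
  calc ‖(inner ℂ (T x) x : ℂ)‖ ≤ ‖T x‖ * ‖x‖ := norm_inner_le_norm _ _
    _ ≤ ‖T‖ * ‖x‖ * ‖x‖ := by gcongr; exact T.le_opNorm x
    _ = ‖T‖ := by rw [hx, mul_one, mul_one]

theorem norm_inner_apply_self_le_numRadius (T : E →L[ℂ] E) {x : E} (hx : ‖x‖ = 1) :
    ‖(inner ℂ (T x) x : ℂ)‖ ≤ numRadius T :=
  le_ciSup (bddAbove_norm_inner_apply_self T) ⟨x, hx⟩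

theorem norm_inner_apply_self_le_numRadius_mul_sq (T : E →L[ℂ] E) (x : E) :
    ‖(inner ℂ (T x) x : ℂ)‖ ≤ numRadius T * ‖x‖ ^ 2 := by
  rcases eq_or_ne x 0 with rfl | hx
  · simp
  have hx₀ : 0 < ‖x‖ := norm_pos_iff.2 hx
  set u : E := ((‖x‖⁻¹ : ℝ) : ℂ) • x
  have hu : ‖u‖ = 1 := by
    rw [norm_smul, Complex.norm_real, Real.norm_eq_abs, abs_inv, abs_norm, inv_mul_cancel₀ hx₀.ne']
  have hTu : ‖(inner ℂ (T u) u : ℂ)‖ = ‖(inner ℂ (T x) x : ℂ)‖ / ‖x‖ ^ 2 := by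
    simp only [u, map_smul, inner_smul_left, inner_smul_right, Complex.conj_ofReal, norm_mul,
      Complex.norm_real, Real.norm_eq_abs, abs_inv, abs_norm]
    field_simp
  rw [← div_le_iff₀ (by positivity), ← hTu]
  exact norm_inner_apply_self_le_numRadius T hu

/-- The real part of an operator is dominated by its numerical radius: `‖Re T‖ ≤ w(T)`. -/
theorem norm_add_star_le_two_mul_numRadius [CompleteSpace E] (T : E →L[ℂ] E) :
    ‖T + star T‖ ≤ 2 * numRadius T := by
  have hsa : IsSelfAdjoint (T + star T) := by
    rw [IsSelfAdjoint, star_add, star_star, add_comm]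
  rw [(T + star T).norm_eq_iSup_rayleighQuotient hsa.isSymmetric]
  refine ciSup_le fun x ↦ ?_
  have hre : (T + star T).reApplyInnerSelf x = 2 * (inner ℂ (T x) x : ℂ).re := by
    rw [ContinuousLinearMap.reApplyInnerSelf_apply, add_apply, inner_add_left,
      ContinuousLinearMap.star_eq_adjoint, ContinuousLinearMap.adjoint_inner_left,
      ← inner_conj_symm, RCLike.re_to_complex, Complex.add_re, Complex.conj_re]
    ring
  rw [abs_div, abs_sq, hre, abs_mul, abs_two]
  refine div_le_of_le_mul₀ (by positivity) (by linarith [numRadius_nonneg T]) ?_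
  rw [mul_assoc]
  gcongr
  exact (Complex.abs_re_le_norm _).trans (norm_inner_apply_self_le_numRadius_mul_sq T x)

end NumRadius

theorem sub_mul_add_mul_sub_eq_add_star {R : Type*} [Ring R] [StarRing R] {a b x : R}
    (ha : IsSelfAdjoint a) (hb : IsSelfAdjoint b) (hx : IsSelfAdjoint x) :
    (a - b) * x + x * (a - b) = (a * x - x * b) + star (a * x - x * b) := by
  rw [star_sub, star_mul, star_mul, ha.star_eq, hb.star_eq, hx.star_eq]
  noncomm_ring

theorem stmt_16_general {H : Type*} [NormedAddCommGroup H] [InnerProductSpace ℂ H] [CompleteSpace H]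
    (A B X : H →L[ℂ] H) (hA : IsSelfAdjoint A) (hB : IsSelfAdjoint B)
    (m : ℝ)
    (hX : (X - (m : ℂ) • (1 : H →L[ℂ] H)).IsPositive) :
    numRadius (A * X - X * B) ≥ (1 / 2 : ℝ) * ‖(A - B) * X + X * (A - B)‖ := by
  have hXsa : IsSelfAdjoint X := by
    have hm : IsSelfAdjoint ((m : ℂ) • (1 : H →L[ℂ] H)) :=
      ((Complex.im_eq_zero_iff_isSelfAdjoint _).mp rfl).smul (.one _)
    simpa using hX.isSelfAdjoint.add hm
  rw [sub_mul_add_mul_sub_eq_add_star hA hB hXsa]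
  linarith [norm_add_star_le_two_mul_numRadius (A * X - X * B)]

theorem stmt_16 {H : Type*} [NormedAddCommGroup H] [InnerProductSpace ℂ H] [CompleteSpace H]
    (A B X : H →L[ℂ] H) (hA : IsSelfAdjoint A) (hB : IsSelfAdjoint B)
    (m : ℝ) (hm : 0 < m)
    (hX : (X - (m : ℂ) • (1 : H →L[ℂ] H)).IsPositive) :
    numRadius (A * X - X * B) ≥ (1 / 2 : ℝ) * ‖(A - B) * X + X * (A - B)‖ :=
  stmt_16_general A B X hA hB m hX
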